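/- Let i, j ∈ ℕ with j ≤ i and set (r, r′) = (−ρ−i, −ρ′−j) (so (r, r′) ∈ L_even ∪ L_odd). Then the ℂ-vector space of diagonal sequences for (r, r′) is two-dimensional, and it has a basis s′, s″ such that s′(α) ≠ 0 for all α ≤ j, s′(α) = 0 for all α > j, s″(α) = 0 for all α ≤ i, and s″(α) ≠ 0 for all α > i. -/

import Mathlib

/-!
At `(r, r') = (-ρ-i, -ρ'-j)` the relation (D) becomes `(α - j) s(α) = (α - i) s(α+1)`. The
coefficient of `s(α+1)` vanishes only at `α = i`, so a diagonal sequence is determined by `s(0)`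
and `s(i+1)`, and both values can be prescribed freely: the products of the ratios
`(β - j)/(β - i)` started at `0` and at `i + 1` are solutions, the first one being cut off by the
vanishing factor at `β = j`, which comes no later than the pole at `β = i` since `j ≤ i`.
-/

noncomputable section

/-- ρ = (n-1)/2 as a complex number. -/
def rho (n : ℕ) : ℂ := ((n : ℂ) - 1) / 2

/-- ρ' = (n-2)/2 as a complex number. -/
def rho' (n : ℕ) : ℂ := ((n : ℂ) - 2) / 2

/-- A diagonal sequence for `(r, r')`:
`(2r'+2α+n−2)·s(α) = (2r+2α+n−1)·s(α+1)` for all `α ∈ ℕ`. -/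
def IsDiagSeq (n : ℕ) (r r' : ℂ) (s : ℕ → ℂ) : Prop :=
  ∀ α : ℕ, (2*r' + 2*(α : ℂ) + (n : ℂ) - 2) * s α
    = (2*r + 2*(α : ℂ) + (n : ℂ) - 1) * s (α + 1)

/-- The ℂ-vector space of diagonal sequences for `(r, r')`. -/
def diagSub (n : ℕ) (r r' : ℂ) : Submodule ℂ (ℕ → ℂ) where
  carrier := {s | IsDiagSeq n r r' s}
  add_mem' := by
    intro a b ha hb α
    simp only [Pi.add_apply]
    linear_combination ha α + hb α
  zero_mem' := by
    intro α
    simp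
  smul_mem' := by
    intro c s hs α
    simp only [Pi.smul_apply, smul_eq_mul]
    linear_combination c * hs α

open Finset

section ProdFrom

variable {M : Type*} [CommMonoidWithZero M]

def prodFrom (f : ℕ → M) (a : ℕ) (α : ℕ) : M :=
  if a ≤ α then ∏ β ∈ Ico a α, f β else 0

theorem prodFrom_of_lt {f : ℕ → M} {a α : ℕ} (h : α < a) : prodFrom f a α = 0 :=
  if_neg (not_le.2 h)

@[simp]
theorem prodFrom_self (f : ℕ → M) (a : ℕ) : prodFrom f a a = 1 := by
  simp [prodFrom]

theorem prodFrom_succ {f : ℕ → M} {a α : ℕ} (h : a ≤ α) :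
    prodFrom f a (α + 1) = f α * prodFrom f a α := by
  rw [prodFrom, prodFrom, if_pos h, if_pos (h.trans α.le_succ), prod_Ico_succ_top h, mul_comm]

theorem prodFrom_ne_zero_iff [Nontrivial M] [NoZeroDivisors M] {f : ℕ → M} {a α : ℕ} :
    prodFrom f a α ≠ 0 ↔ a ≤ α ∧ ∀ β ∈ Ico a α, f β ≠ 0 := by
  unfold prodFrom
  split_ifs with h <;> simp [h, prod_ne_zero_iff]

end ProdFrom

theorem eq_zero_of_mul_eq_mul_succ {R : Type*} [MulZeroClass R] [NoZeroDivisors R]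
    {p q s : ℕ → R} (hs : ∀ α, p α * s α = q α * s (α + 1)) {a b : ℕ} (hab : a ≤ b)
    (hq : ∀ α ∈ Ico a b, q α ≠ 0) (ha : s a = 0) : s b = 0 := by
  induction b, hab using Nat.le_induction with
  | base => exact ha
  | succ b hab ih =>
    have hsb : s b = 0 := ih fun α hα => hq α (Ico_subset_Ico_right b.le_succ hα)
    have h := hs b
    rw [hsb, mul_zero, eq_comm, mul_eq_zero] at h
    exact h.resolve_left (hq b (by simp [hab]))

theorem Submodule.finrank_eq_two_of_pair {K V : Type*} [Field K] [AddCommGroup V] [Module K V]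
    {W : Submodule K V} {x y : V} (hx : x ∈ W) (hy : y ∈ W)
    (hind : ∀ c d : K, c • x + d • y = 0 → c = 0 ∧ d = 0)
    (hspan : ∀ v ∈ W, ∃ c d : K, v = c • x + d • y) : Module.finrank K W = 2 := by
  have hW : W = span K (Set.range ![x, y]) := by
    refine le_antisymm (fun v hv => ?_) (span_le.2 (Set.range_subset_iff.2 ?_))
    · obtain ⟨c, d, rfl⟩ := hspan v hv
      exact add_mem (smul_mem _ c (subset_span ⟨0, rfl⟩)) (smul_mem _ d (subset_span ⟨1, rfl⟩))
    · exact Fin.forall_fin_two.2 ⟨hx, hy⟩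
  rw [hW, finrank_span_eq_card (LinearIndependent.pair_iff.2 hind), Fintype.card_fin]

theorem isDiagSeq_neg_rho_sub_iff {n i j : ℕ} {s : ℕ → ℂ} :
    IsDiagSeq n (-rho n - i) (-rho' n - j) s ↔
      ∀ α : ℕ, ((α : ℂ) - j) * s α = ((α : ℂ) - i) * s (α + 1) := by
  unfold IsDiagSeq rho rho'
  refine forall_congr' fun α => ⟨fun h => ?_, fun h => ?_⟩
  · linear_combination h / 2
  · linear_combination 2 * h

section Reduced

variable {i j : ℕ}

theorem natCast_sub_natCast_ne_zero {a b : ℕ} (h : a ≠ b) : (a : ℂ) - b ≠ 0 :=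
  sub_ne_zero.2 (Nat.cast_injective.ne h)

/-- The ratio `s(β+1)/s(β)` prescribed by the reduced relation. -/
def diagRatio (i j : ℕ) (β : ℕ) : ℂ := ((β : ℂ) - j) / ((β : ℂ) - i)

theorem diagRatio_ne_zero {β : ℕ} (hj : β ≠ j) (hi : β ≠ i) : diagRatio i j β ≠ 0 :=
  div_ne_zero (natCast_sub_natCast_ne_zero hj) (natCast_sub_natCast_ne_zero hi)

theorem sub_mul_eq_sub_mul_diagRatio {α : ℕ} (hα : α ≠ i) (x : ℂ) :
    ((α : ℂ) - j) * x = ((α : ℂ) - i) * (diagRatio i j α * x) := by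
  have := natCast_sub_natCast_ne_zero hα
  unfold diagRatio
  field_simp

theorem prodFrom_diagRatio_zero_ne_zero_iff (hji : j ≤ i) {α : ℕ} :
    prodFrom (diagRatio i j) 0 α ≠ 0 ↔ α ≤ j := by
  rw [prodFrom_ne_zero_iff]
  refine ⟨fun ⟨_, h⟩ => not_lt.1 fun hjα => h j (by simp [hjα]) (by simp [diagRatio]),
    fun hαj => ⟨α.zero_le, fun β hβ => diagRatio_ne_zero ?_ ?_⟩⟩ <;>
  · simp only [mem_Ico] at hβ
    omega

theorem prodFrom_diagRatio_succ_ne_zero_iff (hji : j ≤ i) {α : ℕ} :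
    prodFrom (diagRatio i j) (i + 1) α ≠ 0 ↔ i < α := by
  rw [prodFrom_ne_zero_iff]
  refine ⟨fun h => h.1, fun hiα => ⟨hiα, fun β hβ => diagRatio_ne_zero ?_ ?_⟩⟩ <;>
  · simp only [mem_Ico] at hβ
    omega

theorem prodFrom_diagRatio_zero_rec (hji : j ≤ i) (α : ℕ) :
    ((α : ℂ) - j) * prodFrom (diagRatio i j) 0 α
      = ((α : ℂ) - i) * prodFrom (diagRatio i j) 0 (α + 1) := by
  rw [prodFrom_succ α.zero_le]
  by_cases hα : α = i
  · subst hα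
    rcases hji.eq_or_lt with rfl | hji
    · simp
    · rw [(prodFrom_diagRatio_zero_ne_zero_iff hji.le).not_right.2 (not_le.2 hji)]
      simp
  · exact sub_mul_eq_sub_mul_diagRatio hα _

theorem prodFrom_diagRatio_succ_rec (α : ℕ) :
    ((α : ℂ) - j) * prodFrom (diagRatio i j) (i + 1) α
      = ((α : ℂ) - i) * prodFrom (diagRatio i j) (i + 1) (α + 1) := by
  rcases lt_trichotomy α i with hα | rfl | hα
  · rw [prodFrom_of_lt (by omega), prodFrom_of_lt (by omega), mul_zero, mul_zero]
  · rw [prodFrom_of_lt α.lt_succ_self, sub_self, mul_zero, zero_mul]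
  · rw [prodFrom_succ hα]
    exact sub_mul_eq_sub_mul_diagRatio hα.ne' _

theorem eq_zero_of_reduced_rec {s : ℕ → ℂ}
    (hs : ∀ α : ℕ, ((α : ℂ) - j) * s α = ((α : ℂ) - i) * s (α + 1)) (h0 : s 0 = 0)
    (hi : s (i + 1) = 0) : s = 0 := by
  funext α
  have hq : ∀ a b, (i < a ∨ b ≤ i) → ∀ β ∈ Ico a b, (β : ℂ) - i ≠ 0 := fun a b hab β hβ =>
    natCast_sub_natCast_ne_zero (by simp only [mem_Ico] at hβ; omega)
  rcases le_or_gt α i with hα | hα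
  · exact eq_zero_of_mul_eq_mul_succ hs α.zero_le (hq _ _ (.inr hα)) h0
  · exact eq_zero_of_mul_eq_mul_succ hs hα (hq _ _ (.inl i.lt_succ_self)) hi

end Reduced

theorem statement1 (n : ℕ) (i j : ℕ) (hji : j ≤ i) (r r' : ℂ)
    (hr : r = -rho n - (i : ℂ)) (hr' : r' = -rho' n - (j : ℂ)) :
    Module.finrank ℂ (diagSub n r r') = 2 ∧
    ∃ s' s'' : ℕ → ℂ, IsDiagSeq n r r' s' ∧ IsDiagSeq n r r' s'' ∧
      -- s', s'' form a basis: they are linearly independent and span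
      (∀ c d : ℂ, c • s' + d • s'' = 0 → c = 0 ∧ d = 0) ∧
      (∀ s : ℕ → ℂ, IsDiagSeq n r r' s → ∃ c d : ℂ, s = c • s' + d • s'') ∧
      (∀ α ≤ j, s' α ≠ 0) ∧ (∀ α, j < α → s' α = 0) ∧
      (∀ α ≤ i, s'' α = 0) ∧ (∀ α, i < α → s'' α ≠ 0) := by
  subst hr hr'
  set D := diagSub n (-rho n - i) (-rho' n - j)
  set s' := prodFrom (diagRatio i j) 0
  set s'' := prodFrom (diagRatio i j) (i + 1)
  have hs' : s' ∈ D :=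
    isDiagSeq_neg_rho_sub_iff.2 (prodFrom_diagRatio_zero_rec hji)
  have hs'' : s'' ∈ D :=
    isDiagSeq_neg_rho_sub_iff.2 prodFrom_diagRatio_succ_rec
  have hs'_ne_zero α : s' α ≠ 0 ↔ α ≤ j := prodFrom_diagRatio_zero_ne_zero_iff hji
  have hs''_ne_zero α : s'' α ≠ 0 ↔ i < α := prodFrom_diagRatio_succ_ne_zero_iff hji
  have hs'_i : s' (i + 1) = 0 := (hs'_ne_zero _).not_right.2 (by omega)
  have hs''_0 : s'' 0 = 0 := prodFrom_of_lt i.succ_pos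
  have indep (c d : ℂ) (h : c • s' + d • s'' = 0) : c = 0 ∧ d = 0 := by
    simpa [hs'_i, hs''_0, s', s''] using And.intro (congrFun h 0) (congrFun h (i + 1))
  have spans (s : ℕ → ℂ) (hs : s ∈ D) : s = s 0 • s' + s (i + 1) • s'' := by
    have hrec := isDiagSeq_neg_rho_sub_iff.1
      (sub_mem hs (add_mem (D.smul_mem (s 0) hs') (D.smul_mem (s (i + 1)) hs'')))
    refine sub_eq_zero.1 (eq_zero_of_reduced_rec hrec ?_ ?_) <;> simp [hs'_i, hs''_0, s', s'']
  refine ⟨Submodule.finrank_eq_two_of_pair hs' hs'' indep fun s hs => ⟨_, _, spans s hs⟩,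
    s', s'', hs', hs'', indep, fun s hs => ⟨_, _, spans s hs⟩, fun α hα => (hs'_ne_zero α).2 hα,
    fun α hα => (hs'_ne_zero α).not_right.2 (by omega),
    fun α hα => (hs''_ne_zero α).not_right.2 (by omega),
    fun α hα => (hs''_ne_zero α).2 hα⟩

end
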